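/- arXiv:1909.04033 — 8 statements merged into one kernel-verified Lean document; each statement's English description precedes it below -/
import Mathlib

section
/- Let a, b : ℝ → ℂ be continuous, let α(t) := ∫_0^t a(τ)b(τ) dτ, and let g : ℝ × ℝ → ℂ be continuous. Define f(t',t) := g(t',t) + a(t')·∫_t^{t'} b(τ)·exp(α(t') − α(τ))·g(τ,t) dτ. Then for all real t ≤ t', f satisfies the linear Volterra integral equation of the second kind f(t',t) = g(t',t) + ∫_t^{t'} a(t')·b(τ)·f(τ,t) dτ. -/
/-- For a separable kernel `K(t',t) = a(t')·b(t)`, the function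
`f(t',t) = g(t',t) + a(t')·∫_t^{t'} b(τ)·exp(α(t')−α(τ))·g(τ,t) dτ`
solves the linear Volterra integral equation of the second kind with
kernel `K` and inhomogeneity `g` on the region `t ≤ t'`. -/
theorem stmt_1 (a b : ℝ → ℂ) (ha : Continuous a) (hb : Continuous b)
    (α : ℝ → ℂ) (hα : ∀ t, α t = ∫ τ in (0:ℝ)..t, a τ * b τ)
    (g : ℝ → ℝ → ℂ) (hg : Continuous fun p : ℝ × ℝ => g p.1 p.2)
    (f : ℝ → ℝ → ℂ)
    (hf : ∀ t' t, f t' t =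
      g t' t + a t' * ∫ τ in t..t', b τ * Complex.exp (α t' - α τ) * g τ t) :
    ∀ t t' : ℝ, t ≤ t' →
      f t' t = g t' t + ∫ τ in t..t', a t' * b τ * f τ t := by
  intro t t' _
  have hab : Continuous fun s => a s * b s := ha.mul hb
  have hαe : α = fun s => ∫ τ in (0:ℝ)..s, a τ * b τ := funext hα
  have hαd : ∀ s : ℝ, HasDerivAt α (a s * b s) s := by
    intro s
    rw [hαe]
    exact intervalIntegral.integral_hasDerivAt_right (hab.intervalIntegrable _ _)
      (hab.stronglyMeasurableAtFilter _ _) hab.continuousAt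
  have hαc : Continuous α := by
    rw [continuous_iff_continuousAt]; exact fun s => (hαd s).continuousAt
  have hgc : Continuous fun τ => g τ t := hg.comp (continuous_id.prodMk continuous_const)
  set h : ℝ → ℂ := fun σ => b σ * Complex.exp (-α σ) * g σ t with hh
  have hhc : Continuous h := (hb.mul (Complex.continuous_exp.comp hαc.neg)).mul hgc
  set u : ℝ → ℂ := fun s => ∫ σ in t..s, h σ with hu
  have hud : ∀ s : ℝ, HasDerivAt u (h s) s := by
    intro s
    exact intervalIntegral.integral_hasDerivAt_right (hhc.intervalIntegrable _ _)
      (hhc.stronglyMeasurableAtFilter _ _) hhc.continuousAt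
  have huc : Continuous u := by
    rw [continuous_iff_continuousAt]; exact fun s => (hud s).continuousAt
  have hvd : ∀ s : ℝ, HasDerivAt (fun s => Complex.exp (α s))
      (Complex.exp (α s) * (a s * b s)) s := fun s => (hαd s).cexp
  have key : ∀ τ : ℝ, f τ t = g τ t + a τ * (Complex.exp (α τ) * u τ) := by
    intro τ
    rw [hf τ t]
    congr 1
    congr 1
    rw [hu, ← intervalIntegral.integral_const_mul]
    apply intervalIntegral.integral_congr
    intro σ _
    simp only [hh, Complex.exp_sub, Complex.exp_neg, div_eq_mul_inv]
    ring
  rw [key t']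
  congr 1
  have hfc : Continuous fun τ => f τ t := by
    have : (fun τ => f τ t) = fun τ => g τ t + a τ * (Complex.exp (α τ) * u τ) :=
      funext key
    rw [this]
    exact hgc.add (ha.mul ((Complex.continuous_exp.comp hαc).mul huc))
  -- integrability facts
  have hbg : IntervalIntegrable (fun τ => b τ * g τ t) MeasureTheory.volume t t' :=
    (hb.mul hgc).intervalIntegrable _ _
  have huv' : IntervalIntegrable (fun τ => u τ * (Complex.exp (α τ) * (a τ * b τ)))
      MeasureTheory.volume t t' :=
    (huc.mul ((Complex.continuous_exp.comp hαc).mul hab)).intervalIntegrable _ _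
  have ibp : (∫ τ in t..t', u τ * (Complex.exp (α τ) * (a τ * b τ)))
      = u t' * Complex.exp (α t') - u t * Complex.exp (α t)
        - ∫ τ in t..t', h τ * Complex.exp (α τ) := by
    exact intervalIntegral.integral_mul_deriv_eq_deriv_mul
      (fun x _ => hud x) (fun x _ => hvd x)
      (hhc.intervalIntegrable _ _)
      (((Complex.continuous_exp.comp hαc).mul hab).intervalIntegrable _ _)
  have hut : u t = 0 := intervalIntegral.integral_same
  have hhe : ∀ τ : ℝ, h τ * Complex.exp (α τ) = b τ * g τ t := by
    intro τ
    simp only [hh, Complex.exp_neg]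
    field_simp
  symm
  calc ∫ τ in t..t', a t' * b τ * f τ t
      = ∫ τ in t..t', a t' * (b τ * g τ t + u τ * (Complex.exp (α τ) * (a τ * b τ))) := by
        apply intervalIntegral.integral_congr
        intro τ _
        simp only []
        rw [key τ]; ring
    _ = a t' * ∫ τ in t..t', (b τ * g τ t + u τ * (Complex.exp (α τ) * (a τ * b τ))) := by
        rw [intervalIntegral.integral_const_mul]
    _ = a t' * ((∫ τ in t..t', b τ * g τ t)
          + ∫ τ in t..t', u τ * (Complex.exp (α τ) * (a τ * b τ))) := by
        rw [intervalIntegral.integral_add hbg huv']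
    _ = a t' * ((∫ τ in t..t', b τ * g τ t)
          + (u t' * Complex.exp (α t') - 0 - ∫ τ in t..t', b τ * g τ t)) := by
        rw [ibp, hut]
        congr 3
        · ring
        · exact intervalIntegral.integral_congr fun τ _ => hhe τ
    _ = a t' * (Complex.exp (α t') * u t') := by ring
end

section
/- Let T ≤ T' be reals, I := [T,T'], and let K : ℝ × ℝ → ℂ be continuous with |K(t',t)| ≤ C for all t', t ∈ I. Then for every integer n ≥ 1 and all t, t' ∈ I with t ≤ t', the n-th iterated kernel satisfies |K^{⋆n}(t',t)| ≤ C^n · (t' − t)^{n−1} / (n−1)!. -/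
/-- Volterra convolution: `(F ⋆ G)(t',t) = ∫_t^{t'} F(t',τ)·G(τ,t) dτ`. -/
noncomputable def volterraConv (F G : ℝ → ℝ → ℂ) : ℝ → ℝ → ℂ :=
  fun t' t => ∫ τ in t..t', F t' τ * G τ t

/-- Iterated kernels: `volterraIter K n = K^{⋆(n+1)}`, i.e.
`K^{⋆1} = K` and `K^{⋆(n+1)} = K ⋆ K^{⋆n}`. -/
noncomputable def volterraIter (K : ℝ → ℝ → ℂ) : ℕ → ℝ → ℝ → ℂ
  | 0 => K
  | n + 1 => volterraConv K (volterraIter K n)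

lemma volterraIter_cont (K : ℝ → ℝ → ℂ) (hKcont : Continuous fun p : ℝ × ℝ => K p.1 p.2) :
    ∀ n, Continuous fun p : ℝ × ℝ => volterraIter K n p.1 p.2 := by
  intro n
  induction n with
  | zero => exact hKcont
  | succ n ih =>
    have h1 : Continuous (Function.uncurry fun (p : ℝ × ℝ) (τ : ℝ) =>
        K p.1 τ * volterraIter K n τ p.2) := by
      exact (hKcont.comp ((continuous_fst.comp continuous_fst).prodMk continuous_snd)).mul
        (ih.comp (continuous_snd.prodMk (continuous_snd.comp continuous_fst)))
    have hA : Continuous fun p : ℝ × ℝ =>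
        ∫ τ in (0:ℝ)..p.1, K p.1 τ * volterraIter K n τ p.2 :=
      intervalIntegral.continuous_parametric_intervalIntegral_of_continuous h1 continuous_fst
    have hB : Continuous fun p : ℝ × ℝ =>
        ∫ τ in (0:ℝ)..p.2, K p.1 τ * volterraIter K n τ p.2 :=
      intervalIntegral.continuous_parametric_intervalIntegral_of_continuous h1 continuous_snd
    have heq : ∀ p : ℝ × ℝ, volterraIter K (n+1) p.1 p.2 =
        (∫ τ in (0:ℝ)..p.1, K p.1 τ * volterraIter K n τ p.2) -
        (∫ τ in (0:ℝ)..p.2, K p.1 τ * volterraIter K n τ p.2) := by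
      intro p
      have hint : ∀ a b : ℝ, IntervalIntegrable
          (fun τ => K p.1 τ * volterraIter K n τ p.2) MeasureTheory.volume a b := by
        intro a b
        exact ((hKcont.comp (continuous_const.prodMk continuous_id)).mul
          (ih.comp (continuous_id.prodMk continuous_const))).intervalIntegrable _ _
      have := intervalIntegral.integral_interval_sub_left (hint 0 p.1) (hint 0 p.2)
      simp only [volterraIter, volterraConv]
      rw [← this]
    simp only [funext heq]
    exact hA.sub hB

/-- If `|K| ≤ C` on `I² = [T,T']²` then the `n`-th iterated kernel satisfies
`|K^{⋆n}(t',t)| ≤ Cⁿ·(t'−t)^{n−1}/(n−1)!` for every `n ≥ 1` and `t ≤ t'` in `I`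
(here `volterraIter K (n-1) = K^{⋆n}`, with the index shifted by one). -/
theorem stmt_3 (T T' : ℝ) (hTT : T ≤ T') (C : ℝ)
    (K : ℝ → ℝ → ℂ) (hKcont : Continuous fun p : ℝ × ℝ => K p.1 p.2)
    (hKbdd : ∀ t' ∈ Set.Icc T T', ∀ t ∈ Set.Icc T T', ‖K t' t‖ ≤ C) :
    ∀ n : ℕ, ∀ t ∈ Set.Icc T T', ∀ t' ∈ Set.Icc T T', t ≤ t' →
      ‖volterraIter K n t' t‖ ≤
        C ^ (n + 1) * (t' - t) ^ n / (Nat.factorial n : ℝ) := by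
  have hC : 0 ≤ C := le_trans (norm_nonneg _)
    (hKbdd T ⟨le_refl T, hTT⟩ T ⟨le_refl T, hTT⟩)
  have hcont := volterraIter_cont K hKcont
  intro n
  induction n with
  | zero =>
    intro t ht t' ht' htt'
    simpa [volterraIter] using hKbdd t' ht' t ht
  | succ n ih =>
    intro t ht t' ht' htt'
    have hint : IntervalIntegrable (fun τ => K t' τ * volterraIter K n τ t)
        MeasureTheory.volume t t' := by
      exact ((hKcont.comp (continuous_const.prodMk continuous_id)).mul
        ((hcont n).comp (continuous_id.prodMk continuous_const))).intervalIntegrable _ _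
    set g : ℝ → ℝ := fun τ => (C * C ^ (n + 1) / (Nat.factorial n : ℝ)) * (τ - t) ^ n with hg
    have hgint : IntervalIntegrable g MeasureTheory.volume t t' := by
      apply Continuous.intervalIntegrable; fun_prop
    have hbound : ∀ᵐ τ ∂(MeasureTheory.volume.restrict (Set.uIoc t t')),
        ‖K t' τ * volterraIter K n τ t‖ ≤ g τ := by
      apply MeasureTheory.ae_restrict_of_forall_mem measurableSet_uIoc
      intro τ hτ
      rw [Set.uIoc_of_le htt'] at hτ
      have hτI : τ ∈ Set.Icc T T' := ⟨le_trans ht.1 hτ.1.le, le_trans hτ.2 ht'.2⟩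
      rw [norm_mul]
      have h1 : ‖K t' τ‖ ≤ C := hKbdd t' ht' τ hτI
      have h2 : ‖volterraIter K n τ t‖ ≤ C ^ (n + 1) * (τ - t) ^ n / (Nat.factorial n : ℝ) :=
        ih t ht τ hτI hτ.1.le
      calc ‖K t' τ‖ * ‖volterraIter K n τ t‖
          ≤ C * (C ^ (n + 1) * (τ - t) ^ n / (Nat.factorial n : ℝ)) := by
            apply mul_le_mul h1 h2 (norm_nonneg _) hC
        _ = g τ := by rw [hg]; ring
    have hle : ‖volterraIter K (n+1) t' t‖ ≤ |∫ τ in t..t', g τ| := by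
      simpa [volterraIter, volterraConv] using
        intervalIntegral.norm_integral_le_abs_of_norm_le hbound hgint
    have hgval : (∫ τ in t..t', g τ) =
        C ^ (n + 2) * (t' - t) ^ (n + 1) / (Nat.factorial (n + 1) : ℝ) := by
      rw [hg]
      rw [intervalIntegral.integral_const_mul]
      have : (∫ τ in t..t', (τ - t) ^ n) = (t' - t) ^ (n + 1) / (n + 1) := by
        rw [intervalIntegral.integral_comp_sub_right (fun x => x ^ n) t]
        simp [integral_pow]
      rw [this, Nat.factorial_succ]
      push_cast
      field_simp
      ring
    have hnonneg : 0 ≤ C ^ (n + 2) * (t' - t) ^ (n + 1) / (Nat.factorial (n + 1) : ℝ) := by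
      apply div_nonneg
      · exact mul_nonneg (pow_nonneg hC _) (pow_nonneg (by linarith) _)
      · positivity
    calc ‖volterraIter K (n+1) t' t‖ ≤ |∫ τ in t..t', g τ| := hle
      _ = C ^ (n + 2) * (t' - t) ^ (n + 1) / (Nat.factorial (n + 1) : ℝ) := by
          rw [hgval, abs_of_nonneg hnonneg]
end

section
/- Let A be a (possibly noncommutative) ring, d ≥ 2, and K_1, …, K_d ∈ A with each 1 − K_i a unit. Write R_i := (1 − K_i)⁻¹, K := K_1 + ⋯ + K_d, and P := R_d · R_{d−1} · ⋯ · R_1. Then 1 − P·(1 − K) = P · Σ_{n=2}^{d} (−1)^n Σ_{i_1 < i_2 < ⋯ < i_n} K_{i_1}·K_{i_2}·⋯·K_{i_n}, where the inner sum runs over all strictly increasing index tuples 1 ≤ i_1 < ⋯ < i_n ≤ d and the products K_{i_1}·⋯·K_{i_n} are taken in increasing order of indices. -/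
/-!
Since `P` is the inverse of `Q := (1 - K₁)(1 - K₂)⋯(1 - K_d)`, we have
`1 - P (1 - K) = P (Q - (1 - K))`. Expanding `Q` in increasing order of indices gives the sum
over all subsets `S` of `(-1)^|S|` times the ordered product of the `K_i`, `i ∈ S`; the subsets
with at most one element contribute exactly `1 - K`.
-/

namespace Finset

variable {ι : Type*} [LinearOrder ι]

theorem prod_map_sort_one_add {R : Type*} [Semiring R] (K : ι → R) (s : Finset ι) :
    ((s.sort (· ≤ ·)).map (fun i => 1 + K i)).prod =
      ∑ t ∈ s.powerset, ((t.sort (· ≤ ·)).map K).prod := by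
  classical
  induction s using Finset.induction_on_min with
  | empty => simp
  | insert a s ha ih =>
    have has : a ∉ s := fun h => lt_irrefl a (ha a h)
    have sort_insert : ∀ t ⊆ s, (insert a t).sort (· ≤ ·) = a :: t.sort (· ≤ ·) :=
      fun t ht => Finset.sort_insert _ (fun b hb => (ha b (ht hb)).le) (fun h => has (ht h))
    rw [sort_insert s subset_rfl, sum_powerset_insert has, List.map_cons, List.prod_cons, ih,
      add_mul, one_mul, mul_sum]
    congr 1
    refine sum_congr rfl fun t ht => ?_
    rw [sort_insert t (mem_powerset.1 ht), List.map_cons, List.prod_cons]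

variable {R : Type*} [Ring R]

theorem prod_map_sort_one_sub (K : ι → R) (s : Finset ι) :
    ((s.sort (· ≤ ·)).map (fun i => 1 - K i)).prod =
      ∑ t ∈ s.powerset, (-1) ^ #t * ((t.sort (· ≤ ·)).map K).prod := by
  simp only [sub_eq_add_neg, prod_map_sort_one_add (fun i => -K i)]
  refine sum_congr rfl fun t _ => ?_
  have := List.prod_map_neg ((t.sort (· ≤ ·)).map K)
  rwa [List.map_map, List.length_map, length_sort] at this

theorem prod_map_sort_one_sub_eq_sum_powersetCard (K : ι → R) (s : Finset ι) :
    ((s.sort (· ≤ ·)).map (fun i => 1 - K i)).prod =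
      1 - ∑ i ∈ s, K i + ∑ n ∈ Icc 2 #s, (-1) ^ n *
        ∑ t ∈ s.powersetCard n, ((t.sort (· ≤ ·)).map K).prod := by
  have hcard : ∀ t ∈ s.powerset, #t ∈ insert 0 (insert 1 (Icc 2 #s)) := fun t ht => by
    have := card_le_card (mem_powerset.1 ht)
    simp only [mem_insert, mem_Icc]; omega
  have hfiber : ∀ n, ∑ t ∈ s.powerset with #t = n, (-1) ^ #t * ((t.sort (· ≤ ·)).map K).prod =
      (-1) ^ n * ∑ t ∈ s.powersetCard n, ((t.sort (· ≤ ·)).map K).prod := fun n => by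
    rw [← powersetCard_eq_filter, mul_sum]
    exact sum_congr rfl fun t ht => by rw [(mem_powersetCard.1 ht).2]
  rw [prod_map_sort_one_sub, ← sum_fiberwise_of_maps_to hcard, sum_insert (by simp),
    sum_insert (by simp)]
  simp only [hfiber, powersetCard_zero, powersetCard_one, sum_singleton, sum_map, sort_empty,
    sort_singleton, Function.Embedding.coeFn_mk, List.map_nil, List.map_cons, List.prod_nil,
    List.prod_singleton, pow_zero, mul_one, pow_one, neg_one_mul]
  abel

end Finset

theorem List.prod_reverse_map_inverse_mul_prod {M₀ : Type*} [MonoidWithZero M₀] (l : List M₀)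
    (hl : ∀ x ∈ l, IsUnit x) : (l.map Ring.inverse).reverse.prod * l.prod = 1 := by
  induction l with
  | nil => simp
  | cons x l ih =>
    rw [List.map_cons, List.reverse_cons, List.prod_append, List.prod_singleton, List.prod_cons,
      mul_assoc, ← mul_assoc (Ring.inverse x), Ring.inverse_mul_cancel x (hl x (by simp)), one_mul,
      ih fun y hy => hl y (by simp [hy])]

theorem stmt_8_general {A : Type*} [Ring A] (d : ℕ) (K : Fin d → A)
    (hKi : ∀ i, IsUnit (1 - K i))
    (R : Fin d → A) (hR : ∀ i, R i = Ring.inverse (1 - K i))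
    (P : A) (hP : P = ((List.ofFn R).reverse).prod) :
    1 - P * (1 - ∑ i, K i) =
      P * ∑ n ∈ Finset.Icc 2 d, (-1 : A) ^ n *
        ∑ s ∈ Finset.powersetCard n (Finset.univ : Finset (Fin d)),
          ((s.sort (· ≤ ·)).map K).prod := by
  have hPQ : P * (List.ofFn fun i => 1 - K i).prod = 1 := by
    have hR' : R = Ring.inverse ∘ fun i => 1 - K i := funext hR
    rw [hP, hR', ← List.map_ofFn]
    exact List.prod_reverse_map_inverse_mul_prod _ (by simpa [List.mem_ofFn] using hKi)
  have hexpand := Finset.prod_map_sort_one_sub_eq_sum_powersetCard K Finset.univ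
  rw [Fin.sort_univ, ← List.ofFn_eq_map, Finset.card_univ, Fintype.card_fin] at hexpand
  rw [hexpand] at hPQ
  nth_rewrite 1 [← hPQ]
  rw [← mul_sub, add_sub_cancel_left]

/-- Alternative form of the quantity `T = 1 − P·(1 − K)` arising in the
decomposition of the resolvent of a sum kernel `K = Σ_{i=1}^d K_i`:
`T = P · Σ_{n=2}^{d} (−1)^n Σ_{i₁<⋯<iₙ} K_{i₁}⋯K_{iₙ}`, where
`P = R_d ⋯ R_1` (decreasing order), `R_i = (1 − K_i)⁻¹`, and the inner sum
runs over strictly increasing index tuples, products taken in increasing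
order of indices. -/
theorem stmt_8 {A : Type*} [Ring A] (d : ℕ) (hd : 2 ≤ d) (K : Fin d → A)
    (hKi : ∀ i, IsUnit (1 - K i))
    (R : Fin d → A) (hR : ∀ i, R i = Ring.inverse (1 - K i))
    (P : A) (hP : P = ((List.ofFn R).reverse).prod) :
    1 - P * (1 - ∑ i, K i) =
      P * ∑ n ∈ Finset.Icc 2 d, (-1 : A) ^ n *
        ∑ s ∈ Finset.powersetCard n (Finset.univ : Finset (Fin d)),
          ((s.sort (· ≤ ·)).map K).prod :=
  stmt_8_general d K hKi R hR P hP
end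

section
/- Let T ≤ T' be reals, I := [T,T'], and let K_1, K_2 : ℝ × ℝ → ℂ be continuous and bounded on I². Set K := K_1 + K_2. Suppose r_1, r_2, R̃ : ℝ × ℝ → ℂ are continuous on I² and satisfy, for all t ≤ t' in I, the resolvent equations r_i = K_i + K_i ⋆ r_i (i = 1,2) and R̃ = K + K ⋆ R̃. Define ρ := r_1 + r_2 + r_1 ⋆ r_2 and T̃ := K − ρ + ρ ⋆ K. Then for all t ≤ t' in I, R̃(t',t) = ρ(t',t) + T̃(t',t) + (T̃ ⋆ R̃)(t',t). (Sum-of-∗-resolvents theorem for two kernels, stated for the ordinary parts of the resolvents.) -/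
open MeasureTheory Set Function

universe u v

theorem ContinuousOn.exists_continuous_eqOn {X : Type u} {Y : Type v} [TopologicalSpace X]
    [NormalSpace X] [TopologicalSpace Y] [TietzeExtension.{u, v} Y] {s : Set X} {f : X → Y}
    (hs : IsClosed s) (hf : ContinuousOn f s) : ∃ g : X → Y, Continuous g ∧ EqOn g f s := by
  obtain ⟨g, hg⟩ := ContinuousMap.exists_restrict_eq hs ⟨s.domRestrict f, hf.domRestrict⟩
  exact ⟨g, g.continuous, fun x hx => congrFun (congrArg ContinuousMap.toFun hg) ⟨x, hx⟩⟩

theorem intervalIntegral_intervalIntegral_swap_triangle {E : Type*} [NormedAddCommGroup E]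
    [NormedSpace ℝ E] {f : ℝ → ℝ → E} {a b : ℝ} (hab : a ≤ b)
    (hf : IntegrableOn (uncurry f) (Icc a b ×ˢ Icc a b)) :
    ∫ x in a..b, ∫ y in x..b, f x y = ∫ y in a..b, ∫ x in a..y, f x y := by
  -- both sides are iterated integrals of `f` cut off to the triangle `x < y`
  set g : ℝ → ℝ → E := fun x y => {p : ℝ × ℝ | p.1 < p.2}.indicator (uncurry f) (x, y)
  have inner_y : ∀ x ∈ Icc a b, ∫ y in x..b, f x y = ∫ y in a..b, g x y := by
    intro x hx
    have hg : g x = (Ioi x).indicator (f x) := by ext y; simp [g, indicator_apply]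
    rw [hg, intervalIntegral.integral_of_le hab, intervalIntegral.integral_of_le hx.2,
      integral_indicator measurableSet_Ioi, Measure.restrict_restrict measurableSet_Ioi,
      inter_comm, Ioc_inter_Ioi, sup_eq_right.2 hx.1]
  have inner_x : ∀ y ∈ Icc a b, ∫ x in a..y, f x y = ∫ x in a..b, g x y := by
    intro y hy
    have hg : (fun x => g x y) = (Iio y).indicator (fun x => f x y) := by
      ext x; simp [g, indicator_apply]
    have hIoo : Iio y ∩ Ioc a b = Ioo a y := by
      ext x; simp only [mem_inter_iff, mem_Iio, mem_Ioc, mem_Ioo]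
      constructor
      · rintro ⟨hxy, hax, -⟩; exact ⟨hax, hxy⟩
      · rintro ⟨hax, hxy⟩; exact ⟨hxy, hax, hxy.le.trans hy.2⟩
    rw [hg, intervalIntegral.integral_of_le hab, intervalIntegral.integral_of_le hy.1,
      integral_indicator measurableSet_Iio, Measure.restrict_restrict measurableSet_Iio, hIoo,
      integral_Ioc_eq_integral_Ioo]
  have hg : IntegrableOn (uncurry g) (uIoc a b ×ˢ uIoc a b) := by
    rw [uIoc_of_le hab]
    exact ((hf.indicator (measurableSet_lt measurable_fst measurable_snd)).mono_set
      (prod_mono Ioc_subset_Icc_self Ioc_subset_Icc_self))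
  rw [intervalIntegral.integral_congr fun x hx => inner_y x (uIcc_of_le hab ▸ hx),
    intervalIntegral_intervalIntegral_swap hg,
    intervalIntegral.integral_congr fun y hy => inner_x y (uIcc_of_le hab ▸ hy)]

theorem continuous_uncurry_volterraConv {F G : ℝ → ℝ → ℂ} (hF : Continuous (uncurry F))
    (hG : Continuous (uncurry G)) : Continuous (uncurry (volterraConv F G)) := by
  have hFG : Continuous (uncurry fun (p : ℝ × ℝ) s => F p.1 s * G s p.2) := by fun_prop
  have hint : ∀ p : ℝ × ℝ, ∀ c d : ℝ, IntervalIntegrable (fun s => F p.1 s * G s p.2) volume c d :=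
    fun p c d => (hFG.uncurry_left p).intervalIntegrable c d
  have h₁ := intervalIntegral.continuous_parametric_intervalIntegral_of_continuous
    (μ := volume) (a₀ := 0) hFG continuous_fst
  have h₂ := intervalIntegral.continuous_parametric_intervalIntegral_of_continuous
    (μ := volume) (a₀ := 0) hFG continuous_snd
  exact (h₁.sub h₂).congr fun p =>
    intervalIntegral.integral_interval_sub_left (hint p 0 p.1) (hint p 0 p.2)

section Square

variable {a b : ℝ} {F G H : ℝ → ℝ → ℂ}

theorem ContinuousOn.volterraConv (hF : ContinuousOn (uncurry F) (Icc a b ×ˢ Icc a b))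
    (hG : ContinuousOn (uncurry G) (Icc a b ×ˢ Icc a b)) :
    ContinuousOn (uncurry (volterraConv F G)) (Icc a b ×ˢ Icc a b) := by
  have hsq : IsClosed (Icc a b ×ˢ Icc a b) := isClosed_Icc.prod isClosed_Icc
  obtain ⟨F', hF'c, hF'⟩ := hF.exists_continuous_eqOn hsq
  obtain ⟨G', hG'c, hG'⟩ := hG.exists_continuous_eqOn hsq
  have hc := continuous_uncurry_volterraConv (F := curry F') (G := curry G')
    (by simpa using hF'c) (by simpa using hG'c)
  refine hc.continuousOn.congr ?_
  rintro ⟨t', t⟩ ⟨ht', ht⟩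
  refine intervalIntegral.integral_congr fun τ hτ => ?_
  have hτ' : τ ∈ Icc a b := uIcc_subset_Icc ht ht' hτ
  simp [hF' (mk_mem_prod ht' hτ'), hG' (mk_mem_prod hτ' ht)]

theorem intervalIntegrable_volterraConv_integrand
    (hF : ContinuousOn (uncurry F) (Icc a b ×ˢ Icc a b))
    (hG : ContinuousOn (uncurry G) (Icc a b ×ˢ Icc a b)) {t t' : ℝ} (ht : t ∈ Icc a b)
    (ht' : t' ∈ Icc a b) : IntervalIntegrable (fun τ => F t' τ * G τ t) volume t t' :=
  ContinuousOn.intervalIntegrable <|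
    ((hF.uncurry_left t' ht').mul (hG.uncurry_right t ht)).mono (uIcc_subset_Icc ht ht')

theorem volterraConv_assoc (hF : ContinuousOn (uncurry F) (Icc a b ×ˢ Icc a b))
    (hG : ContinuousOn (uncurry G) (Icc a b ×ˢ Icc a b))
    (hH : ContinuousOn (uncurry H) (Icc a b ×ˢ Icc a b)) {t t' : ℝ} (ht : t ∈ Icc a b)
    (ht' : t' ∈ Icc a b) (htt' : t ≤ t') :
    volterraConv (volterraConv F G) H t' t = volterraConv F (volterraConv G H) t' t := by
  have hsub : Icc t t' ⊆ Icc a b := Icc_subset_Icc ht.1 ht'.2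
  have hint : IntegrableOn (uncurry fun τ s => F t' s * G s τ * H τ t) (Icc t t' ×ˢ Icc t t') := by
    refine ContinuousOn.integrableOn_compact (isCompact_Icc.prod isCompact_Icc) ?_
    refine ((((hF.uncurry_left t' ht').comp continuous_snd.continuousOn ?_).mul
      (hG.comp continuous_swap.continuousOn ?_)).mul
      ((hH.uncurry_right t ht).comp continuous_fst.continuousOn ?_))
    · exact fun p hp => hsub hp.2
    · exact fun p hp => ⟨hsub hp.2, hsub hp.1⟩
    · exact fun p hp => hsub hp.1
  calc volterraConv (volterraConv F G) H t' t
      = ∫ τ in t..t', ∫ s in τ..t', F t' s * G s τ * H τ t := by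
        simp only [volterraConv, ← intervalIntegral.integral_mul_const]
    _ = ∫ s in t..t', ∫ τ in t..s, F t' s * G s τ * H τ t :=
        intervalIntegral_intervalIntegral_swap_triangle htt' hint
    _ = volterraConv F (volterraConv G H) t' t := by
        simp only [volterraConv, ← intervalIntegral.integral_const_mul, mul_assoc]

theorem volterraConv_add_left {t t' : ℝ}
    (hF : IntervalIntegrable (fun τ => F t' τ * H τ t) volume t t')
    (hG : IntervalIntegrable (fun τ => G t' τ * H τ t) volume t t') :
    volterraConv (F + G) H t' t = volterraConv F H t' t + volterraConv G H t' t := by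
  simp only [volterraConv, Pi.add_apply, add_mul]
  exact intervalIntegral.integral_add hF hG

theorem volterraConv_sub_left {t t' : ℝ}
    (hF : IntervalIntegrable (fun τ => F t' τ * H τ t) volume t t')
    (hG : IntervalIntegrable (fun τ => G t' τ * H τ t) volume t t') :
    volterraConv (F - G) H t' t = volterraConv F H t' t - volterraConv G H t' t := by
  simp only [volterraConv, Pi.sub_apply, sub_mul]
  exact intervalIntegral.integral_sub hF hG

theorem volterraConv_sub_right {t t' : ℝ}
    (hG : IntervalIntegrable (fun τ => F t' τ * G τ t) volume t t')
    (hH : IntervalIntegrable (fun τ => F t' τ * H τ t) volume t t') :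
    volterraConv F (G - H) t' t = volterraConv F G t' t - volterraConv F H t' t := by
  simp only [volterraConv, Pi.sub_apply, mul_sub]
  exact intervalIntegral.integral_sub hG hH

end Square

def IsVolterraResolvent (a b : ℝ) (K R : ℝ → ℝ → ℂ) : Prop :=
  ∀ t ∈ Icc a b, ∀ t' ∈ Icc a b, t ≤ t' → R t' t = K t' t + volterraConv K R t' t

theorem IsVolterraResolvent.eq_add_add_volterraConv {a b : ℝ} {K R : ℝ → ℝ → ℂ}
    (hres : IsVolterraResolvent a b K R) (ρ : ℝ → ℝ → ℂ)
    (hK : ContinuousOn (uncurry K) (Icc a b ×ˢ Icc a b))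
    (hR : ContinuousOn (uncurry R) (Icc a b ×ˢ Icc a b))
    (hρ : ContinuousOn (uncurry ρ) (Icc a b ×ˢ Icc a b)) {t t' : ℝ} (ht : t ∈ Icc a b)
    (ht' : t' ∈ Icc a b) (htt' : t ≤ t') :
    R t' t = ρ t' t + (K - ρ + volterraConv ρ K) t' t
      + volterraConv (K - ρ + volterraConv ρ K) R t' t := by
  have hρK := hρ.volterraConv hK
  have hK_ρ : ContinuousOn (uncurry (K - ρ)) (Icc a b ×ˢ Icc a b) := hK.sub hρ
  have hKR := intervalIntegrable_volterraConv_integrand hK hR ht ht'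
  have hK_ρR := intervalIntegrable_volterraConv_integrand hK_ρ hR ht ht'
  have hρR := intervalIntegrable_volterraConv_integrand hρ hR ht ht'
  have hρK_R := intervalIntegrable_volterraConv_integrand hρK hR ht ht'
  have hρ_K := intervalIntegrable_volterraConv_integrand hρ hK ht ht'
  have hρ_KR : volterraConv ρ (volterraConv K R) t' t
      = volterraConv ρ R t' t - volterraConv ρ K t' t := by
    rw [← volterraConv_sub_right hρR hρ_K]
    refine intervalIntegral.integral_congr fun τ hτ => ?_
    rw [uIcc_of_le htt'] at hτ
    simp only [Pi.sub_apply, hres t ht τ (Icc_subset_Icc ht.1 ht'.2 hτ) hτ.1, add_sub_cancel_left]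
  rw [volterraConv_add_left hK_ρR hρK_R, volterraConv_sub_left hKR hρR,
    volterraConv_assoc hρ hK hR ht ht' htt', hρ_KR, hres t ht t' ht' htt']
  simp only [Pi.add_apply, Pi.sub_apply]
  ring

theorem stmt_9_general (T T' : ℝ)
    (K₁ K₂ : ℝ → ℝ → ℂ)
    (hK1cont : ContinuousOn (fun p : ℝ × ℝ => K₁ p.1 p.2)
      (Set.Icc T T' ×ˢ Set.Icc T T'))
    (hK2cont : ContinuousOn (fun p : ℝ × ℝ => K₂ p.1 p.2)
      (Set.Icc T T' ×ˢ Set.Icc T T'))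
    (K : ℝ → ℝ → ℂ) (hK : ∀ t' t, K t' t = K₁ t' t + K₂ t' t)
    (r₁ r₂ R : ℝ → ℝ → ℂ)
    (hr1cont : ContinuousOn (fun p : ℝ × ℝ => r₁ p.1 p.2)
      (Set.Icc T T' ×ˢ Set.Icc T T'))
    (hr2cont : ContinuousOn (fun p : ℝ × ℝ => r₂ p.1 p.2)
      (Set.Icc T T' ×ˢ Set.Icc T T'))
    (hRcont : ContinuousOn (fun p : ℝ × ℝ => R p.1 p.2)
      (Set.Icc T T' ×ˢ Set.Icc T T'))
    (hRres : ∀ t ∈ Set.Icc T T', ∀ t' ∈ Set.Icc T T', t ≤ t' →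
      R t' t = K t' t + volterraConv K R t' t)
    (ρ : ℝ → ℝ → ℂ)
    (hρ : ∀ t' t, ρ t' t = r₁ t' t + r₂ t' t + volterraConv r₁ r₂ t' t)
    (Ttil : ℝ → ℝ → ℂ)
    (hTtil : ∀ t' t, Ttil t' t = K t' t - ρ t' t + volterraConv ρ K t' t) :
    ∀ t ∈ Set.Icc T T', ∀ t' ∈ Set.Icc T T', t ≤ t' →
      R t' t = ρ t' t + Ttil t' t + volterraConv Ttil R t' t := by
  intro t ht t' ht' htt'
  obtain rfl : K = K₁ + K₂ := funext₂ hK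
  obtain rfl : Ttil = K₁ + K₂ - ρ + volterraConv ρ (K₁ + K₂) := funext₂ hTtil
  have hρc : ContinuousOn (uncurry ρ) (Icc T T' ×ˢ Icc T T') := by
    obtain rfl : ρ = r₁ + r₂ + volterraConv r₁ r₂ := funext₂ hρ
    exact (hr1cont.add hr2cont).add (hr1cont.volterraConv hr2cont)
  exact IsVolterraResolvent.eq_add_add_volterraConv hRres ρ (hK1cont.add hK2cont) hRcont hρc
    ht ht' htt'

/-- Sum-of-∗-resolvents theorem for two kernels, stated for the ordinary
parts of the resolvents: if `r₁, r₂, R̃` solve the resolvent equations for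
`K₁`, `K₂` and `K = K₁ + K₂` respectively, then with
`ρ = r₁ + r₂ + r₁ ⋆ r₂` and `T̃ = K − ρ + ρ ⋆ K` one has
`R̃ = ρ + T̃ + T̃ ⋆ R̃` on `t ≤ t'` in `I = [T,T']`. -/
theorem stmt_9 (T T' : ℝ) (hTT : T ≤ T')
    (K₁ K₂ : ℝ → ℝ → ℂ)
    (hK1cont : ContinuousOn (fun p : ℝ × ℝ => K₁ p.1 p.2)
      (Set.Icc T T' ×ˢ Set.Icc T T'))
    (hK2cont : ContinuousOn (fun p : ℝ × ℝ => K₂ p.1 p.2)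
      (Set.Icc T T' ×ˢ Set.Icc T T'))
    (hK1bdd : ∃ C : ℝ, ∀ t' ∈ Set.Icc T T', ∀ t ∈ Set.Icc T T', ‖K₁ t' t‖ ≤ C)
    (hK2bdd : ∃ C : ℝ, ∀ t' ∈ Set.Icc T T', ∀ t ∈ Set.Icc T T', ‖K₂ t' t‖ ≤ C)
    (K : ℝ → ℝ → ℂ) (hK : ∀ t' t, K t' t = K₁ t' t + K₂ t' t)
    (r₁ r₂ R : ℝ → ℝ → ℂ)
    (hr1cont : ContinuousOn (fun p : ℝ × ℝ => r₁ p.1 p.2)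
      (Set.Icc T T' ×ˢ Set.Icc T T'))
    (hr2cont : ContinuousOn (fun p : ℝ × ℝ => r₂ p.1 p.2)
      (Set.Icc T T' ×ˢ Set.Icc T T'))
    (hRcont : ContinuousOn (fun p : ℝ × ℝ => R p.1 p.2)
      (Set.Icc T T' ×ˢ Set.Icc T T'))
    (hr1 : ∀ t ∈ Set.Icc T T', ∀ t' ∈ Set.Icc T T', t ≤ t' →
      r₁ t' t = K₁ t' t + volterraConv K₁ r₁ t' t)
    (hr2 : ∀ t ∈ Set.Icc T T', ∀ t' ∈ Set.Icc T T', t ≤ t' →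
      r₂ t' t = K₂ t' t + volterraConv K₂ r₂ t' t)
    (hRres : ∀ t ∈ Set.Icc T T', ∀ t' ∈ Set.Icc T T', t ≤ t' →
      R t' t = K t' t + volterraConv K R t' t)
    (ρ : ℝ → ℝ → ℂ)
    (hρ : ∀ t' t, ρ t' t = r₁ t' t + r₂ t' t + volterraConv r₁ r₂ t' t)
    (Ttil : ℝ → ℝ → ℂ)
    (hTtil : ∀ t' t, Ttil t' t = K t' t - ρ t' t + volterraConv ρ K t' t) :
    ∀ t ∈ Set.Icc T T', ∀ t' ∈ Set.Icc T T', t ≤ t' →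
      R t' t = ρ t' t + Ttil t' t + volterraConv Ttil R t' t :=
  stmt_9_general T T' K₁ K₂ hK1cont hK2cont K hK r₁ r₂ R hr1cont hr2cont hRcont hRres ρ hρ Ttil
    hTtil
end

section
/- Let T ≤ T' be reals, I := [T,T'], let K : ℝ × ℝ → ℂ be continuous and bounded on I², and let g, f : ℝ × ℝ → ℂ be continuous on I² with f satisfying f(t',t) = g(t',t) + ∫_t^{t'} K(t',τ)·f(τ,t) dτ for all t ≤ t' in I. Define the truncated Neumann approximation f_N^{(n−1)} := g + Σ_{k=1}^{n−1} K^{⋆k} ⋆ g. Then for every n ≥ 1 and all t ≤ t' in I, the truncation error is exactly f(t',t) − f_N^{(n−1)}(t',t) = (K^{⋆n} ⋆ f)(t',t). -/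
open MeasureTheory Set intervalIntegral

lemma triangle_swap {Φ : ℝ → ℝ → ℂ} (hΦ : Continuous fun p : ℝ × ℝ => Φ p.1 p.2)
    {a b : ℝ} (hab : a ≤ b) :
    (∫ x in a..b, ∫ y in a..x, Φ x y) = ∫ y in a..b, ∫ x in y..b, Φ x y := by
  set μ := volume.restrict (Set.Ioc a b) with hμ
  set Ψ : ℝ × ℝ → ℂ := {q : ℝ × ℝ | q.2 ≤ q.1}.indicator (fun q => Φ q.1 q.2) with hΨ
  have hΨm : StronglyMeasurable Ψ :=
    hΦ.stronglyMeasurable.indicator (isClosed_le continuous_snd continuous_fst).measurableSet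
  obtain ⟨C, hC⟩ := (isCompact_Icc.prod isCompact_Icc).exists_bound_of_continuousOn
    (s := Icc a b ×ˢ Icc a b) hΦ.continuousOn
  have hint : Integrable (Function.uncurry fun x y => Ψ (x, y)) (μ.prod μ) := by
    have huc : (Function.uncurry fun x y => Ψ (x, y)) = Ψ := rfl
    rw [huc, hμ, Measure.prod_restrict]
    refine Integrable.mono' (g := fun _ => C) ?_ hΨm.aestronglyMeasurable.restrict ?_
    · refine integrableOn_const ?_
      rw [Measure.prod_prod, Real.volume_Ioc]
      exact (ENNReal.mul_lt_top ENNReal.ofReal_lt_top ENNReal.ofReal_lt_top).ne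
    · refine (ae_restrict_iff' (measurableSet_Ioc.prod measurableSet_Ioc)).2
        (Filter.Eventually.of_forall fun q hq => ?_)
      calc ‖Ψ q‖ ≤ ‖Φ q.1 q.2‖ := norm_indicator_le_norm_self _ _
        _ ≤ C := hC q ⟨Ioc_subset_Icc_self hq.1, Ioc_subset_Icc_self hq.2⟩
  calc (∫ x in a..b, ∫ y in a..x, Φ x y)
      = ∫ x in Ioc a b, ∫ y, Ψ (x, y) ∂μ := by
        rw [intervalIntegral.integral_of_le hab]
        refine setIntegral_congr_fun measurableSet_Ioc fun x hx => ?_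
        have h1 : ∀ y, Ψ (x, y) = (Iic x).indicator (fun y => Φ x y) y := by
          intro y; simp [hΨ, Set.indicator_apply]
        simp only [h1]
        rw [hμ, setIntegral_indicator measurableSet_Iic,
          Set.Ioc_inter_Iic, min_eq_right hx.2,
          intervalIntegral.integral_of_le hx.1.le]
    _ = ∫ y, ∫ x, Ψ (x, y) ∂μ ∂μ := integral_integral_swap hint
    _ = ∫ y in a..b, ∫ x in y..b, Φ x y := by
        rw [intervalIntegral.integral_of_le hab]
        refine setIntegral_congr_fun measurableSet_Ioc fun y hy => ?_
        have h1 : ∀ x, Ψ (x, y) = (Ici y).indicator (fun x => Φ x y) x := by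
          intro x; simp [hΨ, Set.indicator_apply]
        have h2 : Ioc a b ∩ Ici y = Icc y b := by
          ext x
          simp only [mem_inter_iff, mem_Ioc, mem_Ici, mem_Icc]
          exact ⟨fun ⟨⟨_, h2⟩, h3⟩ => ⟨h3, h2⟩,
            fun ⟨h1', h2'⟩ => ⟨⟨lt_of_lt_of_le hy.1 h1', h2'⟩, h1'⟩⟩
        simp only [h1]
        rw [hμ, setIntegral_indicator measurableSet_Ici, h2,
          integral_Icc_eq_integral_Ioc, intervalIntegral.integral_of_le hy.2]


open MeasureTheory Set intervalIntegral

lemma contFixFst {F : ℝ → ℝ → ℂ} (hF : Continuous fun p : ℝ × ℝ => F p.1 p.2) (b : ℝ) :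
    Continuous fun τ => F b τ := hF.comp (continuous_const.prodMk continuous_id)

lemma contFixSnd {F : ℝ → ℝ → ℂ} (hF : Continuous fun p : ℝ × ℝ => F p.1 p.2) (a : ℝ) :
    Continuous fun τ => F τ a := hF.comp (continuous_id.prodMk continuous_const)

lemma contConv {F G : ℝ → ℝ → ℂ} (hF : Continuous fun p : ℝ × ℝ => F p.1 p.2)
    (hG : Continuous fun p : ℝ × ℝ => G p.1 p.2) :
    Continuous fun p : ℝ × ℝ => volterraConv F G p.1 p.2 := by
  have h : Continuous (Function.uncurry fun (p : ℝ × ℝ) τ => F p.1 τ * G τ p.2) := by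
    exact (hF.comp ((continuous_fst.fst).prodMk continuous_snd)).mul
      (hG.comp (continuous_snd.prodMk continuous_fst.snd))
  have hτ : ∀ p : ℝ × ℝ, Continuous fun τ => F p.1 τ * G τ p.2 := fun p =>
    h.comp ((continuous_const (y := p)).prodMk continuous_id)
  have h1 : Continuous fun p : ℝ × ℝ => ∫ τ in (0:ℝ)..p.1, F p.1 τ * G τ p.2 :=
    intervalIntegral.continuous_parametric_intervalIntegral_of_continuous h continuous_fst
  have h2 : Continuous fun p : ℝ × ℝ => ∫ τ in (0:ℝ)..p.2, F p.1 τ * G τ p.2 :=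
    intervalIntegral.continuous_parametric_intervalIntegral_of_continuous h continuous_snd
  have key : ∀ p : ℝ × ℝ, volterraConv F G p.1 p.2 =
      (∫ τ in (0:ℝ)..p.1, F p.1 τ * G τ p.2) - ∫ τ in (0:ℝ)..p.2, F p.1 τ * G τ p.2 := by
    intro p
    rw [intervalIntegral.integral_interval_sub_left ((hτ p).intervalIntegrable _ _)
      ((hτ p).intervalIntegrable _ _)]
    rfl
  simp only [key]
  exact h1.sub h2

lemma contIter {K : ℝ → ℝ → ℂ} (hK : Continuous fun p : ℝ × ℝ => K p.1 p.2) :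
    ∀ n, Continuous fun p : ℝ × ℝ => volterraIter K n p.1 p.2
  | 0 => hK
  | (n+1) => contConv hK (contIter hK n)
lemma iter_flip {K : ℝ → ℝ → ℂ} (hK : Continuous fun p : ℝ × ℝ => K p.1 p.2) :
    ∀ m, ∀ a b : ℝ, a ≤ b →
      volterraIter K (m + 1) b a = ∫ τ in a..b, volterraIter K m b τ * K τ a := by
  intro m
  induction m with
  | zero => intro a b _; rfl
  | succ m ih =>
    intro a b hab
    have hCm := contIter hK m
    have hΦ : Continuous fun p : ℝ × ℝ =>
        K b p.1 * (volterraIter K m p.1 p.2 * K p.2 a) :=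
      ((contFixFst hK b).comp continuous_fst).mul
        (hCm.mul ((contFixSnd hK a).comp continuous_snd))
    calc volterraIter K (m + 1 + 1) b a
        = ∫ τ in a..b, K b τ * volterraIter K (m + 1) τ a := rfl
      _ = ∫ τ in a..b, ∫ σ in a..τ, K b τ * (volterraIter K m τ σ * K σ a) := by
          refine intervalIntegral.integral_congr fun τ hτ => ?_
          rw [Set.uIcc_of_le hab] at hτ
          rw [ih a τ hτ.1, ← intervalIntegral.integral_const_mul]
      _ = ∫ σ in a..b, ∫ τ in σ..b, K b τ * (volterraIter K m τ σ * K σ a) :=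
          triangle_swap hΦ hab
      _ = ∫ σ in a..b, (∫ τ in σ..b, K b τ * volterraIter K m τ σ) * K σ a := by
          refine intervalIntegral.integral_congr fun σ _ => ?_
          rw [← intervalIntegral.integral_mul_const]
          exact intervalIntegral.integral_congr fun τ _ => by ring
      _ = ∫ σ in a..b, volterraIter K (m + 1) b σ * K σ a := rfl
lemma master {K g f : ℝ → ℝ → ℂ}
    (hK : Continuous fun p : ℝ × ℝ => K p.1 p.2)
    (hfc : Continuous fun p : ℝ × ℝ => f p.1 p.2)
    (hgc : Continuous fun p : ℝ × ℝ => g p.1 p.2)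
    {T T' : ℝ}
    (hf : ∀ t ∈ Set.Icc T T', ∀ t' ∈ Set.Icc T T', t ≤ t' →
      f t' t = g t' t + ∫ τ in t..t', K t' τ * f τ t) :
    ∀ m : ℕ, ∀ t ∈ Set.Icc T T', ∀ t' ∈ Set.Icc T T', t ≤ t' →
      f t' t - (g t' t + ∑ k ∈ Finset.range m, volterraConv (volterraIter K k) g t' t)
        = volterraConv (volterraIter K m) f t' t := by
  intro m
  induction m with
  | zero =>
    intro t ht t' ht' htt'
    rw [Finset.sum_range_zero, add_zero, hf t ht t' ht' htt']
    exact add_sub_cancel_left _ _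
  | succ m ih =>
    intro t ht t' ht' htt'
    rw [Finset.sum_range_succ]
    have IH := ih t ht t' ht' htt'
    have hCm := contIter hK m
    have hΦ : Continuous fun p : ℝ × ℝ =>
        volterraIter K m t' p.1 * (K p.1 p.2 * f p.2 t) :=
      ((contFixFst hCm t').comp continuous_fst).mul
        (hK.mul ((contFixSnd hfc t).comp continuous_snd))
    have key : volterraConv (volterraIter K m) f t' t
        - volterraConv (volterraIter K m) g t' t
        = volterraConv (volterraIter K (m + 1)) f t' t := by
      calc volterraConv (volterraIter K m) f t' t - volterraConv (volterraIter K m) g t' t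
          = ∫ τ in t..t',
              volterraIter K m t' τ * f τ t - volterraIter K m t' τ * g τ t := by
            rw [intervalIntegral.integral_sub
              ((show Continuous fun τ => volterraIter K m t' τ * f τ t from
                (contFixFst hCm t').mul (contFixSnd hfc t)).intervalIntegrable _ _)
              ((show Continuous fun τ => volterraIter K m t' τ * g τ t from
                (contFixFst hCm t').mul (contFixSnd hgc t)).intervalIntegrable _ _)]
            rfl
        _ = ∫ τ in t..t', ∫ σ in t..τ, volterraIter K m t' τ * (K τ σ * f σ t) := by
            refine intervalIntegral.integral_congr fun τ hτ => ?_
            rw [Set.uIcc_of_le htt'] at hτ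
            rw [hf t ht τ ⟨le_trans ht.1 hτ.1, le_trans hτ.2 ht'.2⟩ hτ.1,
              intervalIntegral.integral_const_mul]
            ring
        _ = ∫ σ in t..t', ∫ τ in σ..t', volterraIter K m t' τ * (K τ σ * f σ t) :=
            triangle_swap hΦ htt'
        _ = ∫ σ in t..t', volterraIter K (m + 1) t' σ * f σ t := by
            refine intervalIntegral.integral_congr fun σ hσ => ?_
            rw [Set.uIcc_of_le htt'] at hσ
            rw [iter_flip hK m σ t' hσ.2, ← intervalIntegral.integral_mul_const]
            exact intervalIntegral.integral_congr fun τ _ => by ring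
        _ = volterraConv (volterraIter K (m + 1)) f t' t := rfl
    linear_combination IH + key

/-- Exact truncation error for the Neumann series: if `f = g + K ⋆ f` on
`t ≤ t'` in `I = [T,T']`, then with
`f_N^{(n−1)} = g + Σ_{k=1}^{n−1} K^{⋆k} ⋆ g` one has
`f − f_N^{(n−1)} = K^{⋆n} ⋆ f` for every `n ≥ 1`. Here
`volterraIter K k = K^{⋆(k+1)}`, so `Σ_{k=1}^{n-1} K^{⋆k} ⋆ g` is the sum over
`k ∈ range (n-1)` of `volterraIter K k ⋆ g` and `K^{⋆n} = volterraIter K (n-1)`. -/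
theorem stmt_11 (T T' : ℝ) (hTT : T ≤ T')
    (K : ℝ → ℝ → ℂ)
    (hKcont : ContinuousOn (fun p : ℝ × ℝ => K p.1 p.2)
      (Set.Icc T T' ×ˢ Set.Icc T T'))
    (hKbdd : ∃ C : ℝ, ∀ t' ∈ Set.Icc T T', ∀ t ∈ Set.Icc T T', ‖K t' t‖ ≤ C)
    (g f : ℝ → ℝ → ℂ)
    (hgcont : ContinuousOn (fun p : ℝ × ℝ => g p.1 p.2)
      (Set.Icc T T' ×ˢ Set.Icc T T'))
    (hfcont : ContinuousOn (fun p : ℝ × ℝ => f p.1 p.2)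
      (Set.Icc T T' ×ˢ Set.Icc T T'))
    (hf : ∀ t ∈ Set.Icc T T', ∀ t' ∈ Set.Icc T T', t ≤ t' →
      f t' t = g t' t + ∫ τ in t..t', K t' τ * f τ t) :
    ∀ n : ℕ, 1 ≤ n → ∀ t ∈ Set.Icc T T', ∀ t' ∈ Set.Icc T T', t ≤ t' →
      f t' t -
        (g t' t + ∑ k ∈ Finset.range (n - 1), volterraConv (volterraIter K k) g t' t)
        = volterraConv (volterraIter K (n - 1)) f t' t := by
  -- clamp to the interval
  set cl : ℝ → ℝ := fun x => max T (min x T') with hcl_def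
  have hcl_cont : Continuous cl := continuous_const.max (continuous_id.min continuous_const)
  have hcl_mem : ∀ x, cl x ∈ Set.Icc T T' := fun x =>
    ⟨le_max_left _ _, max_le hTT (min_le_right _ _)⟩
  have hcl_eq : ∀ x ∈ Set.Icc T T', cl x = x := fun x hx => by
    simp only [hcl_def]
    rw [min_eq_left hx.2, max_eq_right hx.1]
  set Kc : ℝ → ℝ → ℂ := fun t' t => K (cl t') (cl t) with hKc_def
  set gc : ℝ → ℝ → ℂ := fun t' t => g (cl t') (cl t) with hgc_def
  set fc : ℝ → ℝ → ℂ := fun t' t => f (cl t') (cl t) with hfc_def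
  have hcomp : Continuous fun p : ℝ × ℝ => (cl p.1, cl p.2) :=
    (hcl_cont.comp continuous_fst).prodMk (hcl_cont.comp continuous_snd)
  have hKcc : Continuous fun p : ℝ × ℝ => Kc p.1 p.2 :=
    hKcont.comp_continuous hcomp fun p => ⟨hcl_mem _, hcl_mem _⟩
  have hgcc : Continuous fun p : ℝ × ℝ => gc p.1 p.2 :=
    hgcont.comp_continuous hcomp fun p => ⟨hcl_mem _, hcl_mem _⟩
  have hfcc : Continuous fun p : ℝ × ℝ => fc p.1 p.2 :=
    hfcont.comp_continuous hcomp fun p => ⟨hcl_mem _, hcl_mem _⟩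
  have hfeq : ∀ t ∈ Set.Icc T T', ∀ t' ∈ Set.Icc T T', t ≤ t' →
      fc t' t = gc t' t + ∫ τ in t..t', Kc t' τ * fc τ t := by
    intro t ht t' ht' htt'
    have e : ∀ x ∈ Set.Icc T T', ∀ y ∈ Set.Icc T T',
        Kc x y = K x y ∧ gc x y = g x y ∧ fc x y = f x y := by
      intro x hx y hy
      simp [hKc_def, hgc_def, hfc_def, hcl_eq x hx, hcl_eq y hy]
    rw [(e t' ht' t ht).2.2, (e t' ht' t ht).2.1, hf t ht t' ht' htt']
    congr 1
    refine intervalIntegral.integral_congr fun τ hτ => ?_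
    rw [Set.uIcc_of_le htt'] at hτ
    have hτI : τ ∈ Set.Icc T T' := ⟨le_trans ht.1 hτ.1, le_trans hτ.2 ht'.2⟩
    rw [(e t' ht' τ hτI).1, (e τ hτI t ht).2.2]
  -- iterated kernels agree on the triangle
  have iter_agree : ∀ k, ∀ t ∈ Set.Icc T T', ∀ t' ∈ Set.Icc T T', t ≤ t' →
      volterraIter Kc k t' t = volterraIter K k t' t := by
    intro k
    induction k with
    | zero =>
      intro t ht t' ht' _
      show Kc t' t = K t' t
      simp [hKc_def, hcl_eq t ht, hcl_eq t' ht']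
    | succ k ihk =>
      intro t ht t' ht' htt'
      show (∫ τ in t..t', Kc t' τ * volterraIter Kc k τ t)
          = ∫ τ in t..t', K t' τ * volterraIter K k τ t
      refine intervalIntegral.integral_congr fun τ hτ => ?_
      rw [Set.uIcc_of_le htt'] at hτ
      have hτI : τ ∈ Set.Icc T T' := ⟨le_trans ht.1 hτ.1, le_trans hτ.2 ht'.2⟩
      rw [ihk t ht τ hτI hτ.1]
      simp [hKc_def, hcl_eq t' ht', hcl_eq τ hτI]
  have conv_agree : ∀ (G Gc : ℝ → ℝ → ℂ),
      (∀ x ∈ Set.Icc T T', ∀ y ∈ Set.Icc T T', Gc x y = G x y) →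
      ∀ k, ∀ t ∈ Set.Icc T T', ∀ t' ∈ Set.Icc T T', t ≤ t' →
      volterraConv (volterraIter Kc k) Gc t' t = volterraConv (volterraIter K k) G t' t := by
    intro G Gc hG k t ht t' ht' htt'
    refine intervalIntegral.integral_congr fun τ hτ => ?_
    rw [Set.uIcc_of_le htt'] at hτ
    have hτI : τ ∈ Set.Icc T T' := ⟨le_trans ht.1 hτ.1, le_trans hτ.2 ht'.2⟩
    rw [iter_agree k τ hτI t' ht' hτ.2, hG τ hτI t ht]
  intro n hn t ht t' ht' htt'
  obtain ⟨m, rfl⟩ : ∃ m, n = m + 1 := ⟨n - 1, (Nat.succ_pred_eq_of_pos hn).symm⟩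
  simp only [Nat.add_sub_cancel]
  have H := master hKcc hfcc hgcc hfeq m t ht t' ht' htt'
  rw [show fc t' t = f t' t by simp [hfc_def, hcl_eq t ht, hcl_eq t' ht'],
    show gc t' t = g t' t by simp [hgc_def, hcl_eq t ht, hcl_eq t' ht'],
    conv_agree f fc (fun x hx y hy => by simp [hfc_def, hcl_eq x hx, hcl_eq y hy])
      m t ht t' ht' htt',
    Finset.sum_congr rfl (fun k _ =>
      conv_agree g gc (fun x hx y hy => by simp [hgc_def, hcl_eq x hx, hcl_eq y hy])
        k t ht t' ht' htt')] at H
  exact H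
end

section
/- Let a, b ∈ ℂ with a ≠ b, and let t ≤ t' be reals. Then a·e^{a(t'−t)} + b·e^{b(t'−t)} + ∫_t^{t'} a·e^{a(t'−τ)}·b·e^{b(τ−t)} dτ = (a²·e^{a(t'−t)} − b²·e^{b(t'−t)})/(a − b). (Ordinary part of the ⋆-product of the two resolvents of the constant kernels a and b; this is the zeroth-order re-summed approximation for the constant sum kernel a + b.) -/
/-- Ordinary part of the ⋆-product of the resolvents of the constant kernels
`a` and `b` (`a ≠ b`): for `t ≤ t'`,
`a·e^{a(t'−t)} + b·e^{b(t'−t)} + ∫_t^{t'} a·e^{a(t'−τ)}·b·e^{b(τ−t)} dτ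
  = (a²·e^{a(t'−t)} − b²·e^{b(t'−t)})/(a − b)`. -/
theorem stmt_16 (a b : ℂ) (hab : a ≠ b) (t t' : ℝ) (htt : t ≤ t') :
    a * Complex.exp (a * (↑t' - ↑t)) + b * Complex.exp (b * (↑t' - ↑t)) +
      ∫ τ in t..t',
        a * Complex.exp (a * (↑t' - ↑τ)) * (b * Complex.exp (b * (↑τ - ↑t)))
      = (a ^ 2 * Complex.exp (a * (↑t' - ↑t)) -
          b ^ 2 * Complex.exp (b * (↑t' - ↑t))) / (a - b) := by
  have hba : b - a ≠ 0 := sub_ne_zero.mpr (Ne.symm hab)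
  have hab' : a - b ≠ 0 := sub_ne_zero.mpr hab
  have key : ∀ τ : ℝ,
      a * Complex.exp (a * (↑t' - ↑τ)) * (b * Complex.exp (b * (↑τ - ↑t)))
      = a * b * Complex.exp (a * ↑t' - b * ↑t) * Complex.exp ((b - a) * ↑τ) := by
    intro τ
    rw [show a * ↑t' - b * ↑t = a * (↑t' - ↑τ) + b * (↑τ - ↑t) - (b - a) * ↑τ by ring,
      Complex.exp_sub, Complex.exp_add]
    field_simp
  simp_rw [key]
  rw [intervalIntegral.integral_const_mul, integral_exp_mul_complex hba,
    show a * b * Complex.exp (a * ↑t' - b * ↑t) *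
        ((Complex.exp ((b - a) * ↑t') - Complex.exp ((b - a) * ↑t)) / (b - a))
      = a * b * (Complex.exp (a * ↑t' - b * ↑t) * Complex.exp ((b - a) * ↑t')
          - Complex.exp (a * ↑t' - b * ↑t) * Complex.exp ((b - a) * ↑t)) / (b - a) by ring,
    ← Complex.exp_add, ← Complex.exp_add,
    show a * ↑t' - b * ↑t + (b - a) * ↑t' = b * (↑t' - ↑t) by ring,
    show a * ↑t' - b * ↑t + (b - a) * ↑t = a * (↑t' - ↑t) by ring]
  field_simp
  ring
end

section
/- Let a, b ∈ ℂ with a ≠ b. Define r_1(t',t) := a·e^{a(t'−t)}, r_2(t',t) := b·e^{b(t'−t)}, ρ := r_1 + r_2 + r_1 ⋆ r_2, and T̃ := K − ρ + ρ ⋆ K where K is the constant kernel K(t',t) := a + b. Then for all reals t ≤ t', T̃(t',t) = a·b·(e^{a(t'−t)} − e^{b(t'−t)})/(a − b). -/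
open Complex

lemma sub_mul_integral_exp_mul_exp (c d : ℂ) (t t' : ℝ) :
    (c - d) * ∫ τ in t..t', exp (c * (t' - τ)) * exp (d * (τ - t)) =
      exp (c * (t' - t)) - exp (d * (t' - t)) := by
  have hderiv : ∀ τ : ℝ, HasDerivAt (fun τ : ℝ => -exp (c * (t' - τ) + d * (τ - t)))
      ((c - d) * (exp (c * (t' - τ)) * exp (d * (τ - t)))) τ := by
    intro τ
    have hτ : HasDerivAt (fun τ : ℝ => (τ : ℂ)) 1 τ := (hasDerivAt_id τ).ofReal_comp
    have h := ((hτ.const_sub (t' : ℂ)).const_mul c).add ((hτ.sub_const (t : ℂ)).const_mul d)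
    refine h.cexp.neg.congr_deriv ?_
    rw [Pi.add_apply, exp_add]; ring
  rw [← intervalIntegral.integral_const_mul,
    intervalIntegral.integral_eq_sub_of_hasDerivAt (fun τ _ => hderiv τ)
      (by apply Continuous.intervalIntegrable; fun_prop)]
  simp only [sub_self, mul_zero, zero_add, add_zero]
  ring

noncomputable def expKernel (c : ℂ) : ℝ → ℝ → ℂ := fun t' t => c * exp (c * (t' - t))

lemma integral_expKernel (c : ℂ) (t t' : ℝ) :
    ∫ τ in t..t', expKernel c t' τ = exp (c * (t' - t)) - 1 := by
  simpa [expKernel, intervalIntegral.integral_const_mul] using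
    sub_mul_integral_exp_mul_exp c 0 t t'

lemma sub_mul_volterraConv_expKernel (a b : ℂ) (t' t : ℝ) :
    (a - b) * volterraConv (expKernel a) (expKernel b) t' t =
      a * b * (exp (a * (t' - t)) - exp (b * (t' - t))) := by
  have hfactor : ∀ τ : ℝ, expKernel a t' τ * expKernel b τ t =
      a * b * (exp (a * (t' - τ)) * exp (b * (τ - t))) := fun τ => by
    simp only [expKernel]; ring
  simp only [volterraConv, hfactor, intervalIntegral.integral_const_mul]
  linear_combination a * b * sub_mul_integral_exp_mul_exp a b t t'

lemma expKernel_add_add_volterraConv {a b : ℂ} (hab : a ≠ b) (t' t : ℝ) :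
    expKernel a t' t + expKernel b t' t + volterraConv (expKernel a) (expKernel b) t' t =
      (a * expKernel a t' t - b * expKernel b t' t) / (a - b) := by
  have hconv := sub_mul_volterraConv_expKernel a b t' t
  rw [eq_div_iff (sub_ne_zero.2 hab)]
  simp only [expKernel] at hconv ⊢
  linear_combination hconv

lemma volterraConv_const_right (F : ℝ → ℝ → ℂ) (k : ℂ) (t' t : ℝ) :
    volterraConv F (fun _ _ => k) t' t = (∫ τ in t..t', F t' τ) * k :=
  intervalIntegral.integral_mul_const k _

lemma intervalIntegrable_expKernel (c : ℂ) (t' t₁ t₂ : ℝ) :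
    IntervalIntegrable (expKernel c t') MeasureTheory.volume t₁ t₂ := by
  apply Continuous.intervalIntegrable; unfold expKernel; fun_prop

/-- For the constant sum kernel `K = a + b` split as `K₁ ≡ a`, `K₂ ≡ b`
(`a ≠ b`), with resolvent kernels `r₁(t',t) = a·e^{a(t'−t)}`,
`r₂(t',t) = b·e^{b(t'−t)}`, `ρ = r₁ + r₂ + r₁ ⋆ r₂` and
`T̃ = K − ρ + ρ ⋆ K`, one has
`T̃(t',t) = a·b·(e^{a(t'−t)} − e^{b(t'−t)})/(a − b)` for all `t ≤ t'`. -/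
theorem stmt_17 (a b : ℂ) (hab : a ≠ b)
    (r₁ r₂ : ℝ → ℝ → ℂ)
    (hr1 : ∀ t' t : ℝ, r₁ t' t = a * Complex.exp (a * (↑t' - ↑t)))
    (hr2 : ∀ t' t : ℝ, r₂ t' t = b * Complex.exp (b * (↑t' - ↑t)))
    (K : ℝ → ℝ → ℂ) (hK : ∀ t' t : ℝ, K t' t = a + b)
    (ρ : ℝ → ℝ → ℂ)
    (hρ : ∀ t' t, ρ t' t = r₁ t' t + r₂ t' t + volterraConv r₁ r₂ t' t)
    (Ttil : ℝ → ℝ → ℂ)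
    (hTtil : ∀ t' t, Ttil t' t = K t' t - ρ t' t + volterraConv ρ K t' t) :
    ∀ t t' : ℝ, t ≤ t' →
      Ttil t' t =
        a * b * (Complex.exp (a * (↑t' - ↑t)) - Complex.exp (b * (↑t' - ↑t))) /
          (a - b) := by
  intro t t' _
  obtain rfl : r₁ = expKernel a := funext₂ hr1
  obtain rfl : r₂ = expKernel b := funext₂ hr2
  obtain rfl : K = fun _ _ => a + b := funext₂ hK
  have hρ_closed : ρ = fun t' t => (a * expKernel a t' t - b * expKernel b t' t) / (a - b) :=
    funext₂ fun t' t => (hρ t' t).trans (expKernel_add_add_volterraConv hab t' t)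
  have hρK : volterraConv ρ (fun _ _ => a + b) t' t =
      (a + b) * ((a * (exp (a * (t' - t)) - 1) - b * (exp (b * (t' - t)) - 1)) / (a - b)) := by
    rw [hρ_closed, volterraConv_const_right, intervalIntegral.integral_div,
      intervalIntegral.integral_sub ((intervalIntegrable_expKernel a t' t t').const_mul a)
        ((intervalIntegrable_expKernel b t' t t').const_mul b),
      intervalIntegral.integral_const_mul, intervalIntegral.integral_const_mul,
      integral_expKernel, integral_expKernel]
    ring
  rw [hTtil, hρK, hρ_closed]
  simp only [expKernel]
  field_simp [sub_ne_zero.2 hab]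
  ring
end

section
/- Let ω ∈ ℝ with ω ≠ 0 and f₁ ∈ ℝ. Define the separable kernel k(t',t) := (i·f₁/2)·sin(ω t') (independent of t). Then the function r(t',t) := (i·f₁/2)·sin(ω t')·exp( −(i·f₁/(2ω))·(cos(ω t') − cos(ω t)) ) satisfies, for all reals t ≤ t', the resolvent equation r(t',t) = k(t',t) + ∫_t^{t'} k(t',τ)·r(τ,t) dτ. (This is the closed-form ∗-resolvent F = (1_∗ − (i/2)f)^{∗−1} arising in the Volterra-equation formulation of Heun's confluent functions.) -/
/-- The closed-form ∗-resolvent `F = (1_∗ − (i/2)f)^{∗−1}` arising in the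
Volterra-equation formulation of Heun's confluent functions: for the separable
kernel `k(t',t) = (i·f₁/2)·sin(ω t')`, the function
`r(t',t) = (i·f₁/2)·sin(ω t')·exp(−(i·f₁/(2ω))·(cos(ω t') − cos(ω t)))`
satisfies the resolvent equation `r = k + k ⋆ r` on `t ≤ t'`. -/
theorem stmt_18 (ω : ℝ) (hω : ω ≠ 0) (f₁ : ℝ)
    (k : ℝ → ℝ → ℂ)
    (hk : ∀ t' t : ℝ, k t' t = Complex.I * ↑f₁ / 2 * ↑(Real.sin (ω * t')))
    (r : ℝ → ℝ → ℂ)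
    (hr : ∀ t' t : ℝ, r t' t =
      Complex.I * ↑f₁ / 2 * ↑(Real.sin (ω * t')) *
        Complex.exp (-(Complex.I * ↑f₁ / (2 * ↑ω)) *
          (↑(Real.cos (ω * t')) - ↑(Real.cos (ω * t))))) :
    ∀ t t' : ℝ, t ≤ t' →
      r t' t = k t' t + ∫ τ in t..t', k t' τ * r τ t := by
  intro t t' ht
  set c : ℂ := Complex.I * ↑f₁ / 2 with hc
  set g : ℝ → ℂ := fun τ => Complex.exp (-(Complex.I * ↑f₁ / (2 * ↑ω)) *
      (↑(Real.cos (ω * τ)) - ↑(Real.cos (ω * t)))) with hg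
  have hderiv : ∀ τ : ℝ, HasDerivAt g (r τ t) τ := by
    intro τ
    have h1 : HasDerivAt (fun x : ℝ => Real.cos (ω * x)) (-Real.sin (ω * τ) * ω) τ := by
      simpa [Function.comp_def] using (Real.hasDerivAt_cos (ω * τ)).comp τ ((hasDerivAt_id τ).const_mul ω)
    have h2 : HasDerivAt (fun x : ℝ => ((Real.cos (ω * x) : ℂ))) (↑(-Real.sin (ω * τ) * ω)) τ :=
      h1.ofReal_comp
    have h3 : HasDerivAt (fun x : ℝ => (-(Complex.I * ↑f₁ / (2 * ↑ω)) *
        ((Real.cos (ω * x) : ℂ) - ↑(Real.cos (ω * t)))))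
        (-(Complex.I * ↑f₁ / (2 * ↑ω)) * ↑(-Real.sin (ω * τ) * ω)) τ :=
      ((h2.sub_const _).const_mul _)
    have h4 := h3.cexp
    have : Complex.exp (-(Complex.I * ↑f₁ / (2 * ↑ω)) *
        (↑(Real.cos (ω * τ)) - ↑(Real.cos (ω * t)))) *
        (-(Complex.I * ↑f₁ / (2 * ↑ω)) * ↑(-Real.sin (ω * τ) * ω)) = r τ t := by
      rw [hr]
      have hωc : (ω : ℂ) ≠ 0 := Complex.ofReal_ne_zero.mpr hω
      push_cast
      field_simp
      ring
    rw [← this]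
    exact h4
  have hcont : Continuous fun τ => r τ t := by
    have : (fun τ => r τ t) = fun τ => c * ↑(Real.sin (ω * τ)) *
        Complex.exp (-(Complex.I * ↑f₁ / (2 * ↑ω)) *
          (↑(Real.cos (ω * τ)) - ↑(Real.cos (ω * t)))) := by
      funext τ; rw [hr]
    rw [this]
    fun_prop
  have hint : ∫ τ in t..t', r τ t = g t' - g t :=
    intervalIntegral.integral_eq_sub_of_hasDerivAt (fun τ _ => hderiv τ)
      (hcont.intervalIntegrable t t')
  have hgt : g t = 1 := by simp [hg]
  have hkr : ∀ τ : ℝ, k t' τ * r τ t = (c * ↑(Real.sin (ω * t'))) * r τ t := by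
    intro τ; rw [hk]
  calc r t' t = c * ↑(Real.sin (ω * t')) * g t' := by rw [hr]
    _ = k t' t + (c * ↑(Real.sin (ω * t'))) * (g t' - g t) := by
        rw [hk, hgt]; ring
    _ = k t' t + ∫ τ in t..t', k t' τ * r τ t := by
        rw [← hint, ← intervalIntegral.integral_const_mul]
        congr 1
        exact (intervalIntegral.integral_congr (fun τ _ => (hkr τ).symm))
end
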